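/- For any array A, the number of adjacent inversions kainv is at most kseq, where kseq is n minus the length of a longest nondecreasing subsequence of A. -/

import Mathlib

/-- `reachN step k a b`: `b` is reachable from `a` in exactly `k` steps of `step`. -/
def reachN {α : Type*} (step : α → α → Prop) : ℕ → α → α → Prop
  | 0, a, b => a = b
  | k + 1, a, b => ∃ c, step a c ∧ reachN step k c b

/-- The minimum number of `step`-operations needed to turn `l` into a sorted list. -/
noncomputable def sortCost (step : List ℤ → List ℤ → Prop) (l : List ℤ) : ℕ :=
  sInf {k | ∃ l', reachN step k l l' ∧ l'.Pairwise (· ≤ ·)}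

/-- One element move: remove the element at position `i` and reinsert it at position `j`. -/
def moveStep (l l' : List ℤ) : Prop :=
  ∃ (i j : ℕ) (x : ℤ), l[i]? = some x ∧ l' = (l.eraseIdx i).insertIdx j x

/-- One replacement: the two lists have the same length and differ in at most one position. -/
def repStep (l l' : List ℤ) : Prop :=
  l.length = l'.length ∧ ∃ i : ℕ, ∀ j : ℕ, j ≠ i → l[j]? = l'[j]?

/-- One adjacent transposition. -/
def adjSwapStep (l l' : List ℤ) : Prop :=
  ∃ (l₁ l₂ : List ℤ) (a b : ℤ), l = l₁ ++ a :: b :: l₂ ∧ l' = l₁ ++ b :: a :: l₂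

/-- One (arbitrary) transposition: the contents of positions `i` and `j` are exchanged. -/
def swapStep (l l' : List ℤ) : Prop :=
  ∃ i j : ℕ, l.length = l'.length ∧ l'[i]? = l[j]? ∧ l'[j]? = l[i]? ∧
    ∀ k : ℕ, k ≠ i → k ≠ j → l'[k]? = l[k]?

/-- One block swap: two disjoint contiguous blocks are exchanged. -/
def blockSwapStep (l l' : List ℤ) : Prop :=
  ∃ p x q y r : List ℤ, l = p ++ x ++ q ++ y ++ r ∧ l' = p ++ y ++ q ++ x ++ r

/-- One restricted block swap: two disjoint contiguous blocks of equal length are exchanged. -/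
def rblockSwapStep (l l' : List ℤ) : Prop :=
  ∃ p x q y r : List ℤ, x.length = y.length ∧
    l = p ++ x ++ q ++ y ++ r ∧ l' = p ++ y ++ q ++ x ++ r

/-- One block move: a contiguous block is removed and reinserted elsewhere. -/
def blockMoveStep (l l' : List ℤ) : Prop :=
  ∃ p x q r : List ℤ, l = p ++ x ++ q ++ r ∧ l' = p ++ q ++ x ++ r

/-- The length of a longest nondecreasing subsequence of `l`. -/
noncomputable def lisLen (l : List ℤ) : ℕ :=
  sSup {m | ∃ t : List ℤ, t.Sublist l ∧ t.Pairwise (· ≤ ·) ∧ t.length = m}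

/-- `kseq l` is `n` minus the length of a longest nondecreasing subsequence. -/
noncomputable def kseq (l : List ℤ) : ℕ := l.length - lisLen l

/-- The number of inversions of `l`. -/
def kinv (l : List ℤ) : ℕ :=
  (((Finset.range l.length) ×ˢ (Finset.range l.length)).filter
    (fun p => p.1 < p.2 ∧ l.getD p.2 0 < l.getD p.1 0)).card

/-- The number of adjacent inversions of `l`. -/
def kainv (l : List ℤ) : ℕ :=
  ((Finset.range (l.length - 1)).filter (fun i => l.getD (i + 1) 0 < l.getD i 0)).card

/-!
Deleting one entry of a list destroys at most one adjacent inversion, since `c < b < a` forces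
`c < a`. Deleting the `n - lisLen l` entries outside a longest nondecreasing subsequence
therefore removes at most that many adjacent inversions, and leaves a sorted list, which has none.
-/

lemma kainv_eq_sum (l : List ℤ) :
    kainv l = ∑ i ∈ Finset.range (l.length - 1), if l.getD (i + 1) 0 < l.getD i 0 then 1 else 0 :=
  Finset.card_filter _ _

@[simp]
lemma kainv_singleton (a : ℤ) : kainv [a] = 0 := rfl

lemma kainv_cons_cons (a b : ℤ) (l : List ℤ) :
    kainv (a :: b :: l) = (if b < a then 1 else 0) + kainv (b :: l) := by
  simp only [kainv_eq_sum, List.length_cons, Nat.add_sub_cancel]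
  rw [Finset.sum_range_succ', add_comm]
  rfl

lemma kainv_cons_le (a : ℤ) (l : List ℤ) : kainv (a :: l) ≤ kainv l + 1 := by
  cases l with
  | nil => simp
  | cons b l => rw [kainv_cons_cons]; split <;> omega

lemma kainv_append_cons_le (p : List ℤ) (b : ℤ) (q : List ℤ) :
    kainv (p ++ b :: q) ≤ kainv (p ++ q) + 1 := by
  induction p with
  | nil => exact kainv_cons_le b q
  | cons a p ih =>
    cases p with
    | nil =>
      simp only [List.cons_append, List.nil_append, kainv_cons_cons]
      cases q with
      | nil => rw [kainv_singleton]; split <;> omega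
      | cons c q =>
        rw [kainv_cons_cons, kainv_cons_cons]
        split_ifs <;> omega
    | cons a' p =>
      simp only [List.cons_append] at ih ⊢
      rw [kainv_cons_cons, kainv_cons_cons]
      omega

lemma List.Sublist.kainv_le {t l : List ℤ} (h : t.Sublist l) :
    kainv l ≤ kainv t + (l.length - t.length) := by
  suffices ∀ p, kainv (p ++ l) ≤ kainv (p ++ t) + (l.length - t.length) by
    simpa using this []
  induction h with
  | slnil => simp
  | @cons _ u b h ih =>
    intro p
    have := h.length_le
    have := kainv_append_cons_le p b u
    have := ih p
    simp only [List.length_cons]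
    omega
  | cons_cons b _ ih =>
    intro p
    simpa using ih (p ++ [b])

lemma kainv_eq_zero_of_pairwise {l : List ℤ} (h : l.Pairwise (· ≤ ·)) : kainv l = 0 := by
  induction l with
  | nil => rfl
  | cons a l ih =>
    cases l with
    | nil => rfl
    | cons b l =>
      rw [kainv_cons_cons, ih h.of_cons, if_neg (not_lt.2 (List.rel_of_pairwise_cons h (by simp)))]

lemma exists_sublist_pairwise_length_eq_lisLen (l : List ℤ) :
    ∃ t : List ℤ, t.Sublist l ∧ t.Pairwise (· ≤ ·) ∧ t.length = lisLen l := by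
  apply Nat.sSup_mem (s := {m | ∃ t : List ℤ, t.Sublist l ∧ t.Pairwise (· ≤ ·) ∧ t.length = m})
  · exact ⟨0, [], List.nil_sublist l, List.Pairwise.nil, rfl⟩
  · exact ⟨l.length, fun _ ⟨_, ht, _, hlen⟩ => hlen ▸ ht.length_le⟩

/-- The number of adjacent inversions is at most `n` minus the length of a longest
nondecreasing subsequence. -/
theorem kainv_le_kseq (l : List ℤ) : kainv l ≤ kseq l := by
  obtain ⟨t, hsub, hsorted, hlen⟩ := exists_sublist_pairwise_length_eq_lisLen l
  calc kainv l ≤ kainv t + (l.length - t.length) := hsub.kainv_le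
    _ = kseq l := by rw [kainv_eq_zero_of_pairwise hsorted, zero_add, hlen, kseq]
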